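/- arXiv:1006.3182 — 2 statements merged into one kernel-verified Lean document; each statement's English description precedes it below -/
import Mathlib

section
/- The spherically symmetric 3-metric γ = B dR² + D dΩ² is flat (i.e. its Ricci tensor vanishes) if and only if 4 B D = (∂_R D)². -/
/-- The spherically symmetric 3-metric `γ = B dR² + D dΩ²` is flat
(its Ricci tensor vanishes) iff `4 B D = (∂_R D)²`. -/
theorem flatness_iff
    (B D : ℝ → ℝ) (s : Set ℝ) (hs : IsOpen s)
    (hB : ContDiffOn ℝ (⊤ : ℕ∞) B s) (hD : ContDiffOn ℝ (⊤ : ℕ∞) D s)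
    (hBpos : ∀ R ∈ s, 0 < B R) (hDpos : ∀ R ∈ s, 0 < D R)
    (F ℛ RicRR Ricσ : ℝ → ℝ)
    (hF : ∀ R, F R = 1 - (deriv D R) ^ 2 / (4 * B R * D R))
    (hℛ : ∀ R, ℛ R =
      2 / D R * (1 + deriv B R * deriv D R / (2 * (B R) ^ 2)
        + (deriv D R) ^ 2 / (4 * B R * D R) - deriv (deriv D) R / B R))
    (hRicRR : ∀ R, RicRR R = B R * ℛ R / 2 - B R / D R * F R)
    (hRicσ : ∀ R, Ricσ R = D R * ℛ R / 4 + F R / 2) :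
    (∀ R ∈ s, RicRR R = 0 ∧ Ricσ R = 0) ↔
      (∀ R ∈ s, 4 * B R * D R = (deriv D R) ^ 2) := by
  constructor
  · intro h R hR
    obtain ⟨h1, h2⟩ := h R hR
    rw [hRicRR] at h1
    rw [hRicσ] at h2
    have hBne : B R ≠ 0 := (hBpos R hR).ne'
    have hDne : D R ≠ 0 := (hDpos R hR).ne'
    -- from the two equations, F R = 0
    field_simp at h1 h2
    have hDl : D R * ℛ R = -2 * F R := by linarith
    have hBF : B R * F R = 0 := by linear_combination (-h1 + B R * hDl) / 4
    have hF0 : F R = 0 := (mul_eq_zero.1 hBF).resolve_left hBne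
    rw [hF] at hF0
    have h5 : (deriv D R) ^ 2 / (4 * B R * D R) = 1 := by linarith
    have h6 : (deriv D R) ^ 2 = 4 * B R * D R := by
      field_simp at h5
      linarith
    linarith
  · intro h R hR
    have hBne : B R ≠ 0 := (hBpos R hR).ne'
    have hDne : D R ≠ 0 := (hDpos R hR).ne'
    have h4 := h R hR
    -- D' ≠ 0
    have hD'ne : deriv D R ≠ 0 := by
      intro h0
      rw [h0] at h4
      nlinarith [hBpos R hR, hDpos R hR]
    -- differentiability facts
    have hBd : DifferentiableAt ℝ B R :=
      (hB.contDiffAt (hs.mem_nhds hR)).differentiableAt (by simp)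
    have hDd : DifferentiableAt ℝ D R :=
      (hD.contDiffAt (hs.mem_nhds hR)).differentiableAt (by simp)
    have hD'cd : ContDiffOn ℝ (⊤ : ℕ∞) (deriv D) s := hD.deriv_of_isOpen hs (by simp)
    have hD'd : DifferentiableAt ℝ (deriv D) R :=
      (hD'cd.contDiffAt (hs.mem_nhds hR)).differentiableAt (by simp)
    -- differentiate the equation 4 B D = (D')² on s
    have heq : (fun R => 4 * B R * D R) =ᶠ[nhds R] (fun R => (deriv D R) ^ 2) :=
      Filter.eventuallyEq_of_mem (hs.mem_nhds hR) h
    have hderiv := heq.deriv_eq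
    have hlhs : HasDerivAt (fun R => 4 * B R * D R)
        (4 * deriv B R * D R + 4 * B R * deriv D R) R := by
      have := ((hBd.hasDerivAt.const_mul 4).mul hDd.hasDerivAt)
      exact this
    have hrhs : HasDerivAt (fun R => (deriv D R) ^ 2)
        (2 * deriv D R * deriv (deriv D) R) R := by
      have h2 := hD'd.hasDerivAt.pow 2
      norm_num at h2
      exact h2
    have key : 4 * deriv B R * D R + 4 * B R * deriv D R
        = 2 * deriv D R * deriv (deriv D) R := by
      rw [← hlhs.deriv, ← hrhs.deriv, hderiv]
    -- F R = 0
    have hF0 : F R = 0 := by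
      rw [hF, h4]
      field_simp
      norm_num
    -- ℛ R = 0
    have hℛ0 : ℛ R = 0 := by
      rw [hℛ]
      have hD'' : deriv (deriv D) R =
          (4 * deriv B R * D R + 4 * B R * deriv D R) / (2 * deriv D R) := by
        field_simp [key]
        linear_combination -key
      rw [hD'']
      field_simp
      linear_combination (-4 * deriv B R * D R - 2 * B R * deriv D R) * h4
    constructor
    · rw [hRicRR, hF0, hℛ0]; ring
    · rw [hRicσ, hF0, hℛ0]; ring
end

section
/- For a Robertson-Walker metric in coordinates with A = -1, B = a(t)²/(1 + (k/4)r²)², C = 0, D = r²B, the Painlevé-Gullstrand existence condition (d√D)² ≤ 1 is equivalent to k + ȧ(t)² ≥ 0. -/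
/-!
Writing `√D = ρ a / (1 + kρ²/4)`, both partial derivatives are explicit:
`∂ₜ√D = r ȧ / (1 + kr²/4)` and `∂ᵣ√D = a (1 - kr²/4) / (1 + kr²/4)²`, so that
`(d√D)² = (-ȧ²r² + (1 - kr²/4)²) / (1 + kr²/4)²`. Since
`(1 + kr²/4)² - (1 - kr²/4)² = kr²`, the condition `(d√D)² ≤ 1` reads `0 ≤ r² (k + ȧ²)`.
-/

theorem HasDerivAt.sqrt_sq_of_pos {f : ℝ → ℝ} {f' x : ℝ} (hf : HasDerivAt f f' x)
    (hx : 0 < f x) : HasDerivAt (fun y => √(f y ^ 2)) f' x :=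
  hf.congr_of_eventuallyEq <|
    (hf.continuousAt.eventually (lt_mem_nhds hx)).mono fun _ hy => Real.sqrt_sq hy.le

namespace RobertsonWalker

/-- The areal radius `√D` of the Robertson–Walker metric in isotropic coordinates. -/
noncomputable def arealRadius (a : ℝ → ℝ) (k s ρ : ℝ) : ℝ :=
  ρ * a s / (1 + k * ρ ^ 2 / 4)

theorem arealRadius_pos {a : ℝ → ℝ} {k s ρ : ℝ} (ha : 0 < a s) (hρ : 0 < ρ)
    (hden : 0 < 1 + k * ρ ^ 2 / 4) : 0 < arealRadius a k s ρ := by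
  unfold arealRadius
  positivity

theorem hasDerivAt_arealRadius_time {a : ℝ → ℝ} {a' : ℝ} (k r : ℝ) {t : ℝ}
    (ha : HasDerivAt a a' t) :
    HasDerivAt (fun s => arealRadius a k s r) (r * a' / (1 + k * r ^ 2 / 4)) t :=
  (ha.const_mul r).div_const _

theorem hasDerivAt_arealRadius_radial (a : ℝ → ℝ) {k : ℝ} (t : ℝ) {r : ℝ}
    (hden : 1 + k * r ^ 2 / 4 ≠ 0) :
    HasDerivAt (fun ρ => arealRadius a k t ρ)
      (a t * (1 - k * r ^ 2 / 4) / (1 + k * r ^ 2 / 4) ^ 2) r := by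
  have hnum : HasDerivAt (fun ρ : ℝ => ρ * a t) (a t) r := by
    simpa using (hasDerivAt_id r).mul_const (a t)
  have hden' : HasDerivAt (fun ρ : ℝ => 1 + k * ρ ^ 2 / 4) (k * r / 2) r := by
    refine ((((hasDerivAt_pow 2 r).const_mul k).div_const 4).const_add 1).congr_deriv ?_
    norm_num
    ring
  refine (hnum.div hden' hden).congr_deriv ?_
  ring

theorem gradient_sq_eq {a a' k r : ℝ} (ha : a ≠ 0) :
    -(r * a' / (1 + k * r ^ 2 / 4)) ^ 2
        + 1 / (a ^ 2 / (1 + k * r ^ 2 / 4) ^ 2)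
          * (a * (1 - k * r ^ 2 / 4) / (1 + k * r ^ 2 / 4) ^ 2) ^ 2
      = (-(a' ^ 2 * r ^ 2) + (1 - k * r ^ 2 / 4) ^ 2) / (1 + k * r ^ 2 / 4) ^ 2 := by
  field_simp

theorem gradient_sq_le_one_iff {k r v : ℝ} (hr : r ≠ 0) (hden : 0 < 1 + k * r ^ 2 / 4) :
    (-(v ^ 2 * r ^ 2) + (1 - k * r ^ 2 / 4) ^ 2) / (1 + k * r ^ 2 / 4) ^ 2 ≤ 1
      ↔ 0 ≤ k + v ^ 2 := by
  rw [div_le_one (by positivity), ← sub_nonneg,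
    show (1 + k * r ^ 2 / 4) ^ 2 - (-(v ^ 2 * r ^ 2) + (1 - k * r ^ 2 / 4) ^ 2)
      = r ^ 2 * (k + v ^ 2) by ring]
  exact mul_nonneg_iff_of_pos_left (by positivity)

end RobertsonWalker

open RobertsonWalker in
theorem RW_PG_condition_general
    (a : ℝ → ℝ) (ha : Differentiable ℝ a) (hapos : ∀ s, 0 < a s)
    (k t r : ℝ)
    (hr : 0 < r) (hden : 0 < 1 + k * r ^ 2 / 4)
    (D B : ℝ → ℝ → ℝ)
    (hD : ∀ s ρ, D s ρ = ρ ^ 2 * (a s) ^ 2 / (1 + k * ρ ^ 2 / 4) ^ 2)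
    (hB : ∀ s ρ, B s ρ = (a s) ^ 2 / (1 + k * ρ ^ 2 / 4) ^ 2)
    (sdD2 : ℝ)
    (hsdD2 : sdD2
      = -(deriv (fun s => Real.sqrt (D s r)) t) ^ 2
        + 1 / B t r * (deriv (fun ρ => Real.sqrt (D t ρ)) r) ^ 2) :
    sdD2 ≤ 1 ↔ 0 ≤ k + (deriv a t) ^ 2 := by
  have hD_sq : ∀ s ρ, D s ρ = arealRadius a k s ρ ^ 2 := fun s ρ => by
    rw [hD, arealRadius, div_pow, mul_pow]
  have hpos : 0 < arealRadius a k t r := arealRadius_pos (hapos t) hr hden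
  have h_time : deriv (fun s => √(D s r)) t = r * deriv a t / (1 + k * r ^ 2 / 4) := by
    simp only [hD_sq]
    exact ((hasDerivAt_arealRadius_time k r (ha t).hasDerivAt).sqrt_sq_of_pos hpos).deriv
  have h_radial : deriv (fun ρ => √(D t ρ)) r
      = a t * (1 - k * r ^ 2 / 4) / (1 + k * r ^ 2 / 4) ^ 2 := by
    simp only [hD_sq]
    exact ((hasDerivAt_arealRadius_radial a t hden.ne').sqrt_sq_of_pos hpos).deriv
  rw [hsdD2, h_time, h_radial, hB, gradient_sq_eq (hapos t).ne']
  exact gradient_sq_le_one_iff hr.ne' hden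

/-- For a Robertson-Walker metric with `A = -1`, `B = a²/(1 + kr²/4)²`,
`C = 0`, `D = r²B`, the PG existence condition `(d√D)² ≤ 1` is equivalent
to `k + ȧ² ≥ 0`. -/
theorem RW_PG_condition
    (a : ℝ → ℝ) (ha : Differentiable ℝ a) (hapos : ∀ s, 0 < a s)
    (k t r : ℝ) (hk : k = 1 ∨ k = 0 ∨ k = -1)
    (hr : 0 < r) (hden : 0 < 1 + k * r ^ 2 / 4)
    (D B : ℝ → ℝ → ℝ)
    (hD : ∀ s ρ, D s ρ = ρ ^ 2 * (a s) ^ 2 / (1 + k * ρ ^ 2 / 4) ^ 2)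
    (hB : ∀ s ρ, B s ρ = (a s) ^ 2 / (1 + k * ρ ^ 2 / 4) ^ 2)
    (sdD2 : ℝ)
    (hsdD2 : sdD2
      = -(deriv (fun s => Real.sqrt (D s r)) t) ^ 2
        + 1 / B t r * (deriv (fun ρ => Real.sqrt (D t ρ)) r) ^ 2) :
    sdD2 ≤ 1 ↔ 0 ≤ k + (deriv a t) ^ 2 :=
  RW_PG_condition_general a ha hapos k t r hr hden D B hD hB sdD2 hsdD2
end
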